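/- arXiv:1506.08208 — 5 statements merged into one kernel-verified Lean document; each statement's English description precedes it below -/
import Mathlib

section
/- (Borchardt's identity) Let ξ₁,…,ξₙ and z₁,…,zₙ be complex numbers with ξₗ ≠ z_j for all l, j. Then det((ξₗ − z_j)⁻²)_{l,j=1}^n = det((ξₗ − z_j)⁻¹)_{l,j=1}^n · perm((ξₗ − z_j)⁻¹)_{l,j=1}^n. -/
/-- The permanent of a square matrix. -/
noncomputable def permanent {n : ℕ} (A : Matrix (Fin n) (Fin n) ℂ) : ℂ :=
  ∑ σ : Equiv.Perm (Fin n), ∏ l : Fin n, A l (σ l)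

/-- Borchardt's identity. -/
theorem borchardt_identity (n : ℕ) (ξ z : Fin n → ℂ)
    (h : ∀ l j : Fin n, ξ l ≠ z j) :
    Matrix.det (Matrix.of fun l j : Fin n => ((ξ l - z j) ^ 2)⁻¹) =
      Matrix.det (Matrix.of fun l j : Fin n => (ξ l - z j)⁻¹) *
        permanent (Matrix.of fun l j : Fin n => (ξ l - z j)⁻¹) := by
  classical
  have hne : ∀ l j, ξ l - z j ≠ 0 := fun l j => sub_ne_zero.mpr (h l j)
  by_cases hz : Function.Injective z
  · -- main case: the `z j` are pairwise distinct
    -- the family of auxiliary matrices : M γ l a = 1/((ξ l - z a)(ξ l - z (γ a)))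
    set M : Equiv.Perm (Fin n) → Matrix (Fin n) (Fin n) ℂ :=
      fun γ => Matrix.of fun l a => (ξ l - z a)⁻¹ * (ξ l - z (γ a))⁻¹ with hM
    -- each M γ with γ ≠ 1 has linearly dependent columns, so det = 0
    have hdet0 : ∀ γ : Equiv.Perm (Fin n), γ ≠ 1 → (M γ).det = 0 := by
      intro γ hγ
      rw [← Matrix.exists_mulVec_eq_zero_iff]
      refine ⟨fun a => z (γ a) - z a, ?_, ?_⟩
      · -- the vector is nonzero
        intro hv
        apply hγ
        ext a
        have := congrFun hv a
        simp only [Pi.zero_apply, sub_eq_zero] at this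
        have := hz this
        simp [this]
      · funext l
        have key : ∀ a : Fin n,
            (ξ l - z a)⁻¹ * (ξ l - z (γ a))⁻¹ * (z (γ a) - z a)
              = (ξ l - z (γ a))⁻¹ - (ξ l - z a)⁻¹ := by
          intro a
          have hab2 : (ξ l - z a) * (ξ l - z (γ a)) ≠ 0 :=
            mul_ne_zero (hne l a) (hne l (γ a))
          have hba2 : (ξ l - z (γ a)) * (ξ l - z a) ≠ 0 :=
            mul_ne_zero (hne l (γ a)) (hne l a)
          rw [← mul_inv, inv_mul_eq_div, inv_sub_inv (hne l (γ a)) (hne l a),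
            div_eq_div_iff hab2 hba2]
          ring
        simp only [Matrix.mulVec, dotProduct, hM, Matrix.of_apply, Pi.zero_apply]
        rw [Finset.sum_congr rfl fun a _ => key a, Finset.sum_sub_distrib]
        rw [Equiv.sum_comp γ (fun a => (ξ l - z a)⁻¹), sub_self]
    -- determinant expansion along rows: det A = ∑ σ, sign σ * ∏ l, A l (σ l)
    have detexp : ∀ A : Matrix (Fin n) (Fin n) ℂ,
        A.det = ∑ σ : Equiv.Perm (Fin n),
          (Equiv.Perm.sign σ : ℂ) * ∏ l, A l (σ l) := by
      intro A
      rw [← Matrix.det_transpose, Matrix.det_apply']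
      simp [Matrix.transpose_apply]
    -- the key rearrangement
    have key : Matrix.det (Matrix.of fun l j : Fin n => (ξ l - z j)⁻¹) *
        permanent (Matrix.of fun l j : Fin n => (ξ l - z j)⁻¹)
        = ∑ γ : Equiv.Perm (Fin n), (M γ).det := by
      rw [detexp, permanent, Finset.sum_mul_sum]
      -- reindex the inner sum over τ by τ = γ * σ
      have reidx : ∀ σ : Equiv.Perm (Fin n),
          ∑ τ : Equiv.Perm (Fin n), ((Equiv.Perm.sign σ : ℂ) *
              ∏ l, Matrix.of (fun l j : Fin n => (ξ l - z j)⁻¹) l (σ l)) *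
              ∏ l, Matrix.of (fun l j : Fin n => (ξ l - z j)⁻¹) l (τ l)
            = ∑ γ : Equiv.Perm (Fin n), (Equiv.Perm.sign σ : ℂ) *
                ∏ l, (M γ) l (σ l) := by
        intro σ
        rw [← Equiv.sum_comp (Equiv.mulRight σ)]
        refine Finset.sum_congr rfl fun γ _ => ?_
        simp only [Equiv.coe_mulRight, Equiv.Perm.mul_apply, hM, Matrix.of_apply,
          mul_assoc, ← Finset.prod_mul_distrib]
      rw [Finset.sum_congr rfl fun σ _ => reidx σ, Finset.sum_comm]
      exact Finset.sum_congr rfl fun γ _ => (detexp (M γ)).symm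
    rw [key, Finset.sum_eq_single_of_mem 1 (Finset.mem_univ 1)
      (fun γ _ hγ => hdet0 γ hγ)]
    congr 1
    ext l a
    simp [hM, sq, mul_inv]
  · -- degenerate case: two of the `z j` coincide, both sides vanish
    rw [Function.not_injective_iff] at hz
    obtain ⟨a, b, hab, hne'⟩ := hz
    have h1 : Matrix.det (Matrix.of fun l j : Fin n => ((ξ l - z j) ^ 2)⁻¹) = 0 :=
      Matrix.det_zero_of_column_eq hne' (fun k => by simp [hab])
    have h2 : Matrix.det (Matrix.of fun l j : Fin n => (ξ l - z j)⁻¹) = 0 :=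
      Matrix.det_zero_of_column_eq hne' (fun k => by simp [hab])
    rw [h1, h2, zero_mul]
end

section
/- Let ξ₁,…,ξₙ be pairwise distinct real numbers in [−1,1] and let z₁,…,zₙ be pairwise distinct real numbers with z_j > 1 for all j. Then det((ξₗ − z_j)⁻²)_{l,j=1}^n ≠ 0. -/
/-!
Sort the nodes increasingly and the poles decreasingly; the determinant is then positive, by
induction on `n`. Expanding along the last row, with the last node replaced by a variable `t`,
gives `f t = ∑ j, c j * (t - z j)⁻²` with `0 < (-1)^(n+j) * c j` by induction. The numerator
`Q` of `f` over `∏ j, (t - z j)²` has degree at most `2n`; it vanishes at the first `n` nodes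
(two equal rows) and, changing sign from pole to pole, once between any two consecutive poles.
These `2n` roots determine `Q` up to its leading coefficient, whose sign is read off at the
largest pole, and then `Q`, hence `f`, is positive at the last node.
-/

open Matrix Polynomial Finset

theorem neg_one_pow_mul_neg_one_pow_mul {R : Type*} [Monoid R] [HasDistribNeg R] (k : ℕ) (x : R) :
    (-1) ^ k * ((-1) ^ k * x) = x := by
  rw [← mul_assoc, ← pow_add, ← two_mul, pow_mul, neg_one_sq, one_pow, one_mul]

theorem mul_neg_of_neg_one_pow_mul_pos {R : Type*} [CommRing R] [LinearOrder R]
    [IsStrictOrderedRing R] {k : ℕ} {x y : R} (hx : 0 < (-1) ^ k * x)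
    (hy : 0 < (-1) ^ (k + 1) * y) : x * y < 0 := by
  have hprod : (-1) ^ k * x * ((-1) ^ (k + 1) * y) = -(x * y) := by
    rw [pow_succ]
    linear_combination (-(x * y)) * neg_one_pow_mul_neg_one_pow_mul (R := R) k 1
  linarith [mul_pos hx hy]

namespace Polynomial

theorem exists_isRoot_Ioo_of_eval_mul_neg {p : ℝ[X]} {a b : ℝ} (hab : a ≤ b)
    (h : p.eval a * p.eval b < 0) : ∃ c ∈ Set.Ioo a b, p.IsRoot c := by
  have hcont : ContinuousOn (fun x => p.eval x) (Set.Icc a b) := p.continuous.continuousOn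
  rcases mul_neg_iff.1 h with ⟨ha, hb⟩ | ⟨ha, hb⟩
  · exact intermediate_value_Ioo' hab hcont ⟨hb, ha⟩
  · exact intermediate_value_Ioo hab hcont ⟨ha, hb⟩

theorem exists_isRoot_between_of_alternating {p : ℝ[X]} {n m : ℕ} {z : Fin (n + 1) → ℝ}
    (hz : StrictAnti z) (hsign : ∀ j : Fin (n + 1), 0 < (-1) ^ (m + (j : ℕ)) * p.eval (z j)) :
    ∃ w : Fin n → ℝ, ∀ j, w j ∈ Set.Ioo (z j.succ) (z j.castSucc) ∧ p.IsRoot (w j) := by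
  choose w hw using fun j : Fin n =>
    exists_isRoot_Ioo_of_eval_mul_neg (hz j.castSucc_lt_succ).le <| mul_comm (p.eval _) _ ▸
      mul_neg_of_neg_one_pow_mul_pos (hsign j.castSucc) (by simpa [add_assoc] using hsign j.succ)
  exact ⟨w, hw⟩

theorem eq_C_mul_prod_X_sub_C_of_isRoot {R ι : Type*} [CommRing R] [IsDomain R] [Fintype ι]
    {p : R[X]} {r : ι → R} (hr : Function.Injective r) (hdeg : p.natDegree ≤ Fintype.card ι)
    (hroot : ∀ i, p.IsRoot (r i)) :
    p = C (p.coeff (Fintype.card ι)) * ∏ i, (X - C (r i)) := by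
  have hmonic : (∏ i, (X - C (r i))).Monic := monic_prod_of_monic _ _ fun i _ => monic_X_sub_C _
  have hdeg' : (∏ i, (X - C (r i))).natDegree = Fintype.card ι := by simp
  refine eq_of_degree_sub_lt_of_eval_index_eq univ hr.injOn ?_ fun i _ => ?_
  · rw [card_univ, degree_lt_iff_coeff_zero]
    intro m hm
    rcases hm.lt_or_eq with hm | rfl
    · rw [coeff_sub, coeff_C_mul, coeff_eq_zero_of_natDegree_lt (hdeg.trans_lt hm),
        coeff_eq_zero_of_natDegree_lt (hdeg'.trans_lt hm), mul_zero, sub_zero]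
    · rw [coeff_sub, coeff_C_mul, ← hdeg', hmonic.coeff_natDegree, mul_one, sub_self]
  · rw [(hroot i).eq_zero, eval_mul, eval_prod, prod_eq_zero (mem_univ i) (by simp), mul_zero]

end Polynomial

section InvSqSum

variable {ι : Type*} [Fintype ι] [DecidableEq ι]

noncomputable def invSqSum (c z : ι → ℝ) (t : ℝ) : ℝ := ∑ j, c j * ((t - z j) ^ 2)⁻¹

noncomputable def invSqSumNumerator (c z : ι → ℝ) : ℝ[X] :=
  ∑ j, C (c j) * ∏ k ∈ univ.erase j, (X - C (z k)) ^ 2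

theorem eval_invSqSumNumerator {c z : ι → ℝ} {t : ℝ} (ht : ∀ j, t ≠ z j) :
    (invSqSumNumerator c z).eval t = invSqSum c z t * ∏ j, (t - z j) ^ 2 := by
  simp only [invSqSumNumerator, invSqSum, eval_finsetSum, eval_mul, eval_C, eval_prod, eval_pow,
    eval_sub, eval_X, sum_mul]
  refine sum_congr rfl fun j _ => ?_
  have hj : t - z j ≠ 0 := sub_ne_zero.2 (ht j)
  rw [← mul_prod_erase univ (fun k => (t - z k) ^ 2) (mem_univ j)]
  field_simp

theorem eval_invSqSumNumerator_self (c z : ι → ℝ) (j : ι) :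
    (invSqSumNumerator c z).eval (z j) = c j * ∏ k ∈ univ.erase j, (z j - z k) ^ 2 := by
  simp only [invSqSumNumerator, eval_finsetSum, eval_mul, eval_C, eval_prod, eval_pow, eval_sub,
    eval_X]
  refine sum_eq_single j (fun k _ hkj => ?_) (by simp)
  rw [prod_eq_zero (mem_erase.2 ⟨Ne.symm hkj, mem_univ j⟩) (by ring), mul_zero]

theorem natDegree_invSqSumNumerator_le (c z : ι → ℝ) :
    (invSqSumNumerator c z).natDegree ≤ 2 * (Fintype.card ι - 1) :=
  natDegree_sum_le_of_forall_le _ _ fun j _ => (natDegree_C_mul_le _ _).trans <| by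
    rw [natDegree_prod_of_monic _ _ fun k _ => (monic_X_sub_C _).pow 2]
    simp [card_erase_of_mem, mul_comm]

theorem pos_mul_eval_invSqSumNumerator_self {c z : ι → ℝ} (hz : Function.Injective z)
    {ε : ℝ} {j : ι} (hc : 0 < ε * c j) : 0 < ε * (invSqSumNumerator c z).eval (z j) := by
  rw [eval_invSqSumNumerator_self, ← mul_assoc]
  refine mul_pos hc (prod_pos fun k hk => ?_)
  have : z j - z k ≠ 0 := sub_ne_zero.2 (hz.ne (mem_erase.1 hk).1.symm)
  positivity

end InvSqSum

theorem eval_invSqSumNumerator_pos {n : ℕ} {c z : Fin (n + 1) → ℝ} (hz : StrictAnti z)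
    (hc : ∀ j : Fin (n + 1), 0 < (-1) ^ (n + (j : ℕ)) * c j) {s : Fin n → ℝ}
    (hs : Function.Injective s) (hroot : ∀ i, (invSqSumNumerator c z).IsRoot (s i)) {t : ℝ}
    (hst : ∀ i, s i < t) (htz : ∀ j, t < z j) : 0 < (invSqSumNumerator c z).eval t := by
  set Q := invSqSumNumerator c z
  have hsign : ∀ j : Fin (n + 1), 0 < (-1) ^ (n + (j : ℕ)) * Q.eval (z j) := fun j =>
    pos_mul_eval_invSqSumNumerator_self hz.injective (hc j)
  obtain ⟨w, hw⟩ := exists_isRoot_between_of_alternating hz hsign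
  have hwz : ∀ j, w j < z 0 := fun j => (hw j).1.2.trans_le (hz.antitone (Fin.zero_le _))
  have htw : ∀ j, t < w j := fun j => (htz j.succ).trans (hw j).1.1
  have hw_anti : StrictAnti w := fun i j hij =>
    ((hw j).1.2.trans_le (hz.antitone (Fin.succ_le_castSucc_iff.2 hij))).trans (hw i).1.1
  have hQ := eq_C_mul_prod_X_sub_C_of_isRoot
    (hs.sumElim hw_anti.injective fun i j => ((hst i).trans (htw j)).ne)
    (by simpa [two_mul] using natDegree_invSqSumNumerator_le c z)
    (Sum.forall.2 ⟨hroot, fun j => (hw j).2⟩)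
  set a := Q.coeff (Fintype.card (Fin n ⊕ Fin n))
  have heval : ∀ x, Q.eval x = a * ((∏ i, (x - s i)) * ∏ j, (x - w j)) := fun x => by
    rw [hQ]; simp [Fintype.prod_sum_type, eval_prod]
  have ha : 0 < (-1) ^ n * a := by
    have h0 := hsign 0
    rw [heval, Fin.val_zero, add_zero, ← mul_assoc] at h0
    refine pos_of_mul_pos_left h0 (mul_pos (prod_pos fun i _ => ?_) (prod_pos fun j _ => ?_)).le
    · exact sub_pos.2 ((hst i).trans (htz 0))
    · exact sub_pos.2 (hwz j)
  have hflip : ∏ j, (t - w j) = (-1) ^ n * ∏ j, (w j - t) := by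
    simpa using prod_neg (s := univ) fun j => w j - t
  rw [heval, hflip, show ∀ A B : ℝ, a * (A * ((-1) ^ n * B)) = (-1) ^ n * a * (A * B) by
    intros; ring]
  exact mul_pos ha (mul_pos (prod_pos fun i _ => sub_pos.2 (hst i))
    (prod_pos fun j _ => sub_pos.2 (htw j)))

noncomputable def invSqMatrix {m n : Type*} (ξ : m → ℝ) (z : n → ℝ) : Matrix m n ℝ :=
  of fun l j => ((ξ l - z j) ^ 2)⁻¹

theorem det_invSqMatrix_snoc {n : ℕ} (ξ : Fin n → ℝ) (t : ℝ) (z : Fin (n + 1) → ℝ) :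
    det (invSqMatrix (Fin.snoc ξ t) z) =
      invSqSum
        (fun j : Fin (n + 1) => (-1) ^ (n + (j : ℕ)) * det (invSqMatrix ξ (z ∘ j.succAbove)))
        z t := by
  rw [det_succ_row _ (Fin.last n), invSqSum]
  refine sum_congr rfl fun j _ => ?_
  have hminor : (invSqMatrix (Fin.snoc ξ t) z).submatrix (Fin.last n).succAbove j.succAbove =
      invSqMatrix ξ (z ∘ j.succAbove) := by
    ext l k; simp [invSqMatrix]
  rw [hminor]
  simp only [invSqMatrix, of_apply, Fin.snoc_last, Fin.val_last]
  ring

theorem det_invSqMatrix_pos {n : ℕ} {ξ z : Fin n → ℝ} (hξ : StrictMono ξ)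
    (hz : StrictAnti z) (hξz : ∀ l j, ξ l < z j) : 0 < det (invSqMatrix ξ z) := by
  induction n with
  | zero => simp
  | succ n ih =>
    set c : Fin (n + 1) → ℝ := fun j : Fin (n + 1) => (-1) ^ (n + (j : ℕ)) *
      det (invSqMatrix (Fin.init ξ) (z ∘ j.succAbove))
    have hc : ∀ j : Fin (n + 1), 0 < (-1) ^ (n + (j : ℕ)) * c j := fun j => by
      rw [neg_one_pow_mul_neg_one_pow_mul]
      exact ih (hξ.comp Fin.strictMono_castSucc) (hz.comp_strictMono (Fin.strictMono_succAbove j))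
        fun l k => hξz _ _
    have hsnoc (t : ℝ) : det (invSqMatrix (Fin.snoc (Fin.init ξ) t) z) = invSqSum c z t :=
      det_invSqMatrix_snoc _ t z
    have hroot (i : Fin n) : (invSqSumNumerator c z).IsRoot (Fin.init ξ i) := by
      have hrow : invSqSum c z (Fin.init ξ i) = 0 := by
        rw [← hsnoc]
        exact det_zero_of_row_eq (Fin.castSucc_lt_last i).ne (by ext j; simp [invSqMatrix])
      rw [IsRoot, eval_invSqSumNumerator (t := Fin.init ξ i) fun j => (hξz _ j).ne, hrow,
        zero_mul]
    have hlast := eval_invSqSumNumerator_pos hz hc (hξ.comp Fin.strictMono_castSucc).injective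
      hroot (fun i => hξ (Fin.castSucc_lt_last i)) (hξz (Fin.last n))
    rw [eval_invSqSumNumerator fun j => (hξz _ j).ne] at hlast
    rw [← Fin.snoc_init_self ξ, hsnoc]
    exact pos_of_mul_pos_left hlast (prod_nonneg fun j _ => sq_nonneg _)

theorem exists_perm_strictMono_comp {α : Type*} [LinearOrder α] {n : ℕ} {f : Fin n → α}
    (hf : Function.Injective f) : ∃ σ : Equiv.Perm (Fin n), StrictMono (f ∘ σ) :=
  ⟨Tuple.sort f,
    (Tuple.monotone_sort f).strictMono_of_injective (hf.comp (Tuple.sort f).injective)⟩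

/-- Nonvanishing of the determinant `det((ξ_l - z_j)⁻²)` for distinct nodes
`ξ_l ∈ [-1,1]` and distinct poles `z_j > 1`. -/
theorem det_inv_sq_ne_zero (n : ℕ) (ξ z : Fin n → ℝ)
    (hξ : Function.Injective ξ) (hz : Function.Injective z)
    (hξmem : ∀ l, ξ l ∈ Set.Icc (-1 : ℝ) 1) (hzgt : ∀ j, 1 < z j) :
    Matrix.det (Matrix.of fun l j : Fin n => ((ξ l - z j) ^ 2)⁻¹) ≠ 0 := by
  obtain ⟨σ, hσ⟩ := exists_perm_strictMono_comp hξ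
  -- sorting into `ℝᵒᵈ` makes `z ∘ τ` strictly decreasing
  obtain ⟨τ, hτ⟩ := exists_perm_strictMono_comp (α := ℝᵒᵈ) hz
  have hpos : 0 < det ((invSqMatrix ξ z).submatrix σ τ) :=
    det_invSqMatrix_pos hσ hτ fun l j => (hξmem _).2.trans_lt (hzgt _)
  rw [← abs_pos, ← abs_det_submatrix_equiv_equiv σ τ]
  exact hpos.trans_le (le_abs_self _)
end

section
/- There is no nonzero complex polynomial Q of degree ≤ 5 such that the logarithmic derivative ρ = Q′/Q is analytic at the five points −√2, −1/√3, 0, 1/√3, √2 and satisfies ρ(−√2) = −3√2, ρ(−1/√3) = −√3, ρ(0) = 1, ρ(1/√3) = √3, ρ(√2) = 3√2. -/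
open Polynomial

lemma spf_aux (a0 a1 a2 a3 a4 a5 s t : ℂ) (hs : s^2 = 2) (ht : t^2 = 1/3)
    (h1 : a1 + 2*a2*s + 3*a3*s^2 + 4*a4*s^3 + 5*a5*s^4
        = 3*s*(a0 + a1*s + a2*s^2 + a3*s^3 + a4*s^4 + a5*s^5))
    (h2 : a1 + 2*a2*(-s) + 3*a3*(-s)^2 + 4*a4*(-s)^3 + 5*a5*(-s)^4
        = 3*(-s)*(a0 + a1*(-s) + a2*(-s)^2 + a3*(-s)^3 + a4*(-s)^4 + a5*(-s)^5))
    (h3 : a1 + 2*a2*t + 3*a3*t^2 + 4*a4*t^3 + 5*a5*t^4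
        = 3*t*(a0 + a1*t + a2*t^2 + a3*t^3 + a4*t^4 + a5*t^5))
    (h4 : a1 + 2*a2*(-t) + 3*a3*(-t)^2 + 4*a4*(-t)^3 + 5*a5*(-t)^4
        = 3*(-t)*(a0 + a1*(-t) + a2*(-t)^2 + a3*(-t)^3 + a4*(-t)^4 + a5*(-t)^5))
    (h0 : a1 = a0) : a0 = 0 := by
  have hs4 : s^4 = 4 := by linear_combination (s^2+2)*hs
  have hs6 : s^6 = 8 := by linear_combination (s^4+2*s^2+4)*hs
  have ht4 : t^4 = 1/9 := by linear_combination (t^2+1/3)*ht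
  have ht6 : t^6 = 1/27 := by linear_combination (t^4+t^2/3+1/9)*ht
  have ha1 : a1 = 0 := by
    linear_combination (-1/10)*h1 + (-1/10)*h2 + (-9/10)*h3 + (-9/10)*h4
      + ((6*a3-6*a1)/10)*hs + ((10*a5-6*a3)/10)*hs4 + (-6*a5/10)*hs6
      + (9*(6*a3-6*a1)/10)*ht + (9*(10*a5-6*a3)/10)*ht4 + (9*(-6*a5)/10)*ht6
  rw [← h0, ha1]

/-- An unsolvable full interpolation problem for simple partial fractions of
order `≤ 5`. -/
theorem spf_unsolvable_interpolation :
    ¬ ∃ Q : Polynomial ℂ, Q ≠ 0 ∧ Q.degree ≤ 5 ∧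
      Q.eval (-(Real.sqrt 2 : ℂ)) ≠ 0 ∧
      Q.eval (-(1 / (Real.sqrt 3 : ℂ))) ≠ 0 ∧
      Q.eval 0 ≠ 0 ∧
      Q.eval (1 / (Real.sqrt 3 : ℂ)) ≠ 0 ∧
      Q.eval (Real.sqrt 2 : ℂ) ≠ 0 ∧
      (Polynomial.derivative Q).eval (-(Real.sqrt 2 : ℂ)) / Q.eval (-(Real.sqrt 2 : ℂ)) =
        -3 * (Real.sqrt 2 : ℂ) ∧
      (Polynomial.derivative Q).eval (-(1 / (Real.sqrt 3 : ℂ))) /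
          Q.eval (-(1 / (Real.sqrt 3 : ℂ))) = -(Real.sqrt 3 : ℂ) ∧
      (Polynomial.derivative Q).eval 0 / Q.eval 0 = 1 ∧
      (Polynomial.derivative Q).eval (1 / (Real.sqrt 3 : ℂ)) /
          Q.eval (1 / (Real.sqrt 3 : ℂ)) = (Real.sqrt 3 : ℂ) ∧
      (Polynomial.derivative Q).eval (Real.sqrt 2 : ℂ) / Q.eval (Real.sqrt 2 : ℂ) =
        3 * (Real.sqrt 2 : ℂ) := by
  rintro ⟨Q, -, hdeg, hms, hmt, h0ne, hte, hse, hEms, hEmt, hE0, hEt, hEs⟩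
  set s : ℂ := (Real.sqrt 2 : ℂ) with hsdef
  set t : ℂ := 1 / (Real.sqrt 3 : ℂ) with htdef
  have hs2 : s ^ 2 = 2 := by
    rw [hsdef]
    norm_cast
    rw [Real.sq_sqrt (by norm_num)]
  have h3pos : (0:ℝ) < Real.sqrt 3 := Real.sqrt_pos.mpr (by norm_num)
  have h3ne : ((Real.sqrt 3 : ℝ) : ℂ) ≠ 0 := by
    exact Complex.ofReal_ne_zero.mpr (ne_of_gt h3pos)
  have hr3 : ((Real.sqrt 3 : ℝ) : ℂ) ^ 2 = 3 := by
    norm_cast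
    rw [Real.sq_sqrt (by norm_num)]
  have ht2 : t ^ 2 = 1/3 := by
    rw [htdef, div_pow, hr3, one_pow]
  have hc3 : ((Real.sqrt 3 : ℝ) : ℂ) = 3 * t := by
    rw [htdef]
    field_simp
    linear_combination hr3
  clear_value s t
  -- natDegree bounds
  have hnd : Q.natDegree < 6 := by
    have h5 : Q.natDegree ≤ 5 := Polynomial.natDegree_le_iff_degree_le.mpr
      (by exact_mod_cast hdeg)
    omega
  have hndd : (derivative Q).natDegree < 6 :=
    lt_of_le_of_lt (Polynomial.natDegree_derivative_le Q) (by omega)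
  have he : ∀ x : ℂ, Q.eval x = ∑ i ∈ Finset.range 6, Q.coeff i * x ^ i :=
    fun x => Polynomial.eval_eq_sum_range' hnd x
  have hd : ∀ x : ℂ, (derivative Q).eval x
      = ∑ i ∈ Finset.range 6, (derivative Q).coeff i * x ^ i :=
    fun x => Polynomial.eval_eq_sum_range' hndd x
  have h6 : Q.coeff 6 = 0 := Polynomial.coeff_eq_zero_of_natDegree_lt (by omega)
  -- turn divisions into multiplications
  have Ems := (div_eq_iff hms).mp hEms
  have Emt := (div_eq_iff hmt).mp hEmt
  have E0 := (div_eq_iff h0ne).mp hE0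
  have Et := (div_eq_iff hte).mp hEt
  have Es := (div_eq_iff hse).mp hEs
  rw [he, hd] at Ems Emt E0 Et Es
  simp only [Finset.sum_range_succ, Finset.sum_range_zero, Polynomial.coeff_derivative,
    h6] at Ems Emt E0 Et Es
  push_cast at Ems Emt E0 Et Es
  have ha0 : Q.coeff 0 = 0 := by
    apply spf_aux (Q.coeff 0) (Q.coeff 1) (Q.coeff 2) (Q.coeff 3) (Q.coeff 4) (Q.coeff 5)
      s t hs2 ht2
    · linear_combination Es
    · linear_combination Ems
    · linear_combination Et + (Q.coeff 0 + Q.coeff 1*t + Q.coeff 2*t^2 + Q.coeff 3*t^3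
        + Q.coeff 4*t^4 + Q.coeff 5*t^5) * hc3
    · linear_combination Emt - (Q.coeff 0 + Q.coeff 1*(-t) + Q.coeff 2*(-t)^2
        + Q.coeff 3*(-t)^3 + Q.coeff 4*(-t)^4 + Q.coeff 5*(-t)^5) * hc3
    · linear_combination E0
  apply h0ne
  rw [he 0]
  simp [Finset.sum_range_succ, ha0]
end

section
/- Fix the interpolation data ξ₁ = −√2, ξ₂ = −1/√3, ξ₃ = 0, ξ₄ = 1/√3, ξ₅ = √2 and b₁ = −3√2, b₂ = −√3, b₃ = 1, b₄ = √3, b₅ = 3√2. Then for all complex a₂, a₃ the polynomial Q(z) = a₂z² + 2a₃z³ − a₂z⁴ − 3a₃z⁵ satisfies Q′(ξ_j) = b_j Q(ξ_j) for every j = 1,…,5. -/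
open Polynomial

/-- An infinite family of solutions of a generalized interpolation problem. -/
theorem generalized_interpolation_family (a₂ a₃ : ℂ) :
    ∀ Q : Polynomial ℂ,
      Q = Polynomial.C a₂ * Polynomial.X ^ 2 + Polynomial.C (2 * a₃) * Polynomial.X ^ 3
          - Polynomial.C a₂ * Polynomial.X ^ 4 - Polynomial.C (3 * a₃) * Polynomial.X ^ 5 →
      (Polynomial.derivative Q).eval (-(Real.sqrt 2 : ℂ)) =
          (-3 * (Real.sqrt 2 : ℂ)) * Q.eval (-(Real.sqrt 2 : ℂ)) ∧
      (Polynomial.derivative Q).eval (-(1 / (Real.sqrt 3 : ℂ))) =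
          (-(Real.sqrt 3 : ℂ)) * Q.eval (-(1 / (Real.sqrt 3 : ℂ))) ∧
      (Polynomial.derivative Q).eval 0 = 1 * Q.eval 0 ∧
      (Polynomial.derivative Q).eval (1 / (Real.sqrt 3 : ℂ)) =
          (Real.sqrt 3 : ℂ) * Q.eval (1 / (Real.sqrt 3 : ℂ)) ∧
      (Polynomial.derivative Q).eval (Real.sqrt 2 : ℂ) =
          (3 * (Real.sqrt 2 : ℂ)) * Q.eval (Real.sqrt 2 : ℂ) := by
  intro Q hQ
  subst hQ
  set s : ℂ := (Real.sqrt 2 : ℂ) with hs_def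
  set t : ℂ := (Real.sqrt 3 : ℂ) with ht_def
  have hs : s ^ 2 = 2 := by
    rw [hs_def]
    norm_cast
    rw [Real.sq_sqrt (by norm_num : (2:ℝ) ≥ 0)]
  have ht : t ^ 2 = 3 := by
    rw [ht_def]
    norm_cast
    rw [Real.sq_sqrt (by norm_num : (3:ℝ) ≥ 0)]
  have ht0 : t ≠ 0 := by
    intro h
    rw [h] at ht
    norm_num at ht
  have hinv : (1:ℂ)/t = t/3 := by
    rw [div_eq_div_iff ht0 (by norm_num : (3:ℂ) ≠ 0)]
    linear_combination -ht
  refine ⟨?_, ?_, ?_, ?_, ?_⟩ <;>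
    simp only [derivative_add, derivative_sub, derivative_mul, derivative_C, derivative_X_pow,
      eval_add, eval_sub, eval_mul, eval_C, eval_pow, eval_X, eval_natCast, eval_neg,
      zero_mul, eval_zero, zero_add, Nat.cast_ofNat, hinv]
  · linear_combination (9*a₃*s^4 - 3*a₂*s^3 - 3*a₃*s^2 + a₂*s) * hs
  · linear_combination (-a₂*((1/81)*t^3 - (2/9)*t) + a₃*((1/81)*t^4 - (2/9)*t^2)) * ht
  · norm_num
  · linear_combination (a₂*((1/81)*t^3 - (2/9)*t) + a₃*((1/81)*t^4 - (2/9)*t^2)) * ht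
  · linear_combination (9*a₃*s^4 + 3*a₂*s^3 - 3*a₃*s^2 - a₂*s) * hs
end

section
/- For every real x ∈ [−1,1], |(2x + 1)/(x² + x + 1) − (x + 1)| ≤ 1, and equality holds at x = −1 and x = 1. Hence the supremum over [−1,1] of |ρ(x) − (x+1)| equals 1, where ρ(x) = (2x+1)/(x²+x+1). -/
/-!
With `Q x = x² + x + 1 > 0`, one has `(2x+1)/Q x - (x+1) = -x²(x+2)/Q x`, and on `[-1,1]`
`0 ≤ x²(x+2) ≤ Q x` because `x²(x+2) - Q x = (x-1)(x+1)² ≤ 0`. The bound `1` is attained at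
`x = ±1`, so it is the supremum.
-/

section LinearOrderedField

variable {K : Type*} [Field K] [LinearOrder K] [IsStrictOrderedRing K]

lemma sq_add_self_add_one_pos (x : K) : 0 < x ^ 2 + x + 1 := by
  nlinarith [sq_nonneg (2 * x + 1)]

lemma div_sq_add_self_add_one_sub_eq (x : K) :
    (2 * x + 1) / (x ^ 2 + x + 1) - (x + 1) = -(x ^ 2 * (x + 2)) / (x ^ 2 + x + 1) := by
  have hQ := (sq_add_self_add_one_pos x).ne'
  rw [eq_div_iff hQ, sub_mul, div_mul_cancel₀ _ hQ]
  ring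

lemma abs_div_sq_add_self_add_one_sub_le_one {x : K} (hx : x ∈ Set.Icc (-1 : K) 1) :
    |(2 * x + 1) / (x ^ 2 + x + 1) - (x + 1)| ≤ 1 := by
  obtain ⟨hx₁, hx₂⟩ := hx
  have hQ := sq_add_self_add_one_pos x
  have hnum_nonneg : 0 ≤ x ^ 2 * (x + 2) := by nlinarith [sq_nonneg x]
  have hnum_le : x ^ 2 * (x + 2) ≤ x ^ 2 + x + 1 := by nlinarith [sq_nonneg (x + 1)]
  rw [div_sq_add_self_add_one_sub_eq, abs_div, abs_neg, abs_of_nonneg hnum_nonneg,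
    abs_of_pos hQ]
  exact (div_le_one hQ).2 hnum_le

end LinearOrderedField

/-- The simple partial fraction `(2x+1)/(x²+x+1)` deviates from `x+1` on
`[-1,1]` by exactly 1. -/
theorem best_deviation_example :
    (∀ x ∈ Set.Icc (-1 : ℝ) 1, |(2 * x + 1) / (x ^ 2 + x + 1) - (x + 1)| ≤ 1) ∧
    |(2 * (-1 : ℝ) + 1) / ((-1 : ℝ) ^ 2 + (-1) + 1) - ((-1 : ℝ) + 1)| = 1 ∧
    |(2 * (1 : ℝ) + 1) / ((1 : ℝ) ^ 2 + 1 + 1) - ((1 : ℝ) + 1)| = 1 ∧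
    sSup ((fun x : ℝ => |(2 * x + 1) / (x ^ 2 + x + 1) - (x + 1)|) ''
      Set.Icc (-1 : ℝ) 1) = 1 := by
  have hbound : ∀ x ∈ Set.Icc (-1 : ℝ) 1, |(2 * x + 1) / (x ^ 2 + x + 1) - (x + 1)| ≤ 1 :=
    fun _ hx ↦ abs_div_sq_add_self_add_one_sub_le_one hx
  have hone : |(2 * (1 : ℝ) + 1) / ((1 : ℝ) ^ 2 + 1 + 1) - ((1 : ℝ) + 1)| = 1 := by norm_num
  exact ⟨hbound, by norm_num, hone,
    IsGreatest.csSup_eq ⟨⟨1, by norm_num, hone⟩, Set.forall_mem_image.2 hbound⟩⟩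
end
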